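/- Let Q be an inverse quantal frame and X a Q-locale. Define ς'(x) := 1_Q·x for x ∈ X. Then ς'(x) ∈ I(X) and x ∧ ς'(x) = x for all x ∈ X, and ς' satisfies the I(X)-equivariance condition ς'(x ∧ y) = ς'(x) ∧ y for all x ∈ X and y ∈ I(X) if and only if 1_Q·x ∧ 1_Q·x' ≤ 1_Q·(x ∧ 1_Q·x') for all x, x' ∈ X. -/

import Mathlib

/-- A unital involutive quantale: a complete lattice with an associative
multiplication preserving arbitrary joins in each variable, a unit `e`, and a
join-preserving involution. -/
structure UQuantale (Q : Type*) [CompleteLattice Q] where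
  mul : Q → Q → Q
  e : Q
  star : Q → Q
  mul_assoc : ∀ a b c, mul (mul a b) c = mul a (mul b c)
  sSup_mul : ∀ (S : Set Q) (b : Q), mul (sSup S) b = ⨆ a ∈ S, mul a b
  mul_sSup : ∀ (a : Q) (S : Set Q), mul a (sSup S) = ⨆ b ∈ S, mul a b
  e_mul : ∀ a, mul e a = a
  mul_e : ∀ a, mul a e = a
  star_star : ∀ a, star (star a) = a
  star_mul : ∀ a b, star (mul a b) = mul (star b) (star a)
  star_sSup : ∀ S : Set Q, star (sSup S) = ⨆ a ∈ S, star a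

/-- The set of partial units of a quantale. -/
def UQuantale.PU {Q : Type*} [CompleteLattice Q] (Qs : UQuantale Q) : Set Q :=
  {s | Qs.mul s (Qs.star s) ≤ Qs.e ∧ Qs.mul (Qs.star s) s ≤ Qs.e}

/-- An inverse quantal frame: a unital involutive quantale which is a frame,
has a stable support, and whose partial units join to the top. -/
structure InverseQuantalFrame (Q : Type*) [Order.Frame Q] extends UQuantale Q where
  supp : Q → Q
  supp_le_e : ∀ a, supp a ≤ e
  supp_sSup : ∀ S : Set Q, supp (sSup S) = ⨆ a ∈ S, supp a
  supp_le_mul_star : ∀ a, supp a ≤ mul a (star a)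
  le_supp_mul : ∀ a, a ≤ mul (supp a) a
  supp_stable : ∀ b a, b ≤ e → supp (mul b a) = mul b (supp a)
  sSup_PU : sSup {s | mul s (star s) ≤ e ∧ mul (star s) s ≤ e} = ⊤

/-- A left module over a quantale: a complete lattice with a unital associative
action preserving arbitrary joins in each variable. -/
structure QuantaleModule {Q : Type*} [CompleteLattice Q] (Qs : UQuantale Q)
    (X : Type*) [CompleteLattice X] where
  act : Q → X → X
  act_mul : ∀ a b x, act (Qs.mul a b) x = act a (act b x)
  act_e : ∀ x, act Qs.e x = x
  sSup_act : ∀ (S : Set Q) (x : X), act (sSup S) x = ⨆ a ∈ S, act a x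
  act_sSup : ∀ (a : Q) (S : Set X), act a (sSup S) = ⨆ x ∈ S, act a x

/-- A pre-Hilbert module over a quantale. -/
structure PreHilbertModule {Q : Type*} [CompleteLattice Q] (Qs : UQuantale Q)
    (X : Type*) [CompleteLattice X] extends QuantaleModule Qs X where
  inner : X → X → Q
  inner_act : ∀ a x y, inner (act a x) y = Qs.mul a (inner x y)
  sSup_inner : ∀ (S : Set X) (y : X), inner (sSup S) y = ⨆ x ∈ S, inner x y
  inner_star : ∀ x y, inner x y = Qs.star (inner y x)

namespace PreHilbertModule

variable {Q X : Type*} [CompleteLattice Q] [CompleteLattice X] {Qs : UQuantale Q}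

/-- A Hilbert section: `⟨x,s⟩s ≤ x` for all `x`. -/
def IsHilbertSection (H : PreHilbertModule Qs X) (s : X) : Prop :=
  ∀ x, H.act (H.inner x s) s ≤ x

/-- A regular element: `⟨s,s⟩s = s`. -/
def IsRegularSection (H : PreHilbertModule Qs X) (s : X) : Prop :=
  H.act (H.inner s s) s = s

/-- A Hilbert basis: `x = ⋁_{t ∈ S} ⟨x,t⟩t` for all `x`. -/
def IsHilbertBasis (H : PreHilbertModule Qs X) (S : Set X) : Prop :=
  ∀ x, x = ⨆ t ∈ S, H.act (H.inner x t) t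

/-- Non-degeneracy of the inner product. -/
def Nondegenerate (H : PreHilbertModule Qs X) : Prop :=
  ∀ x y, (∀ z, H.inner x z = H.inner y z) → x = y

end PreHilbertModule

/-- A `Q`-locale over an inverse quantal frame: a module which is a frame and
satisfies the anchor condition. -/
structure QLocale {Q : Type*} [Order.Frame Q] (Qf : InverseQuantalFrame Q)
    (X : Type*) [Order.Frame X] extends QuantaleModule Qf.toUQuantale X where
  anchor : ∀ b x, b ≤ Qf.e → act b x = act b ⊤ ⊓ x

/-- A `Q`-sheaf over an inverse quantal frame: a pre-Hilbert module which is a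
frame, satisfies the anchor condition, and has a Hilbert basis. -/
structure QSheaf {Q : Type*} [Order.Frame Q] (Qf : InverseQuantalFrame Q)
    (X : Type*) [Order.Frame X] extends PreHilbertModule Qf.toUQuantale X where
  anchor : ∀ b x, b ≤ Qf.e → act b x = act b ⊤ ⊓ x
  hasBasis : ∃ S : Set X, ∀ x, x = ⨆ t ∈ S, act (inner x t) t

namespace QSheaf

variable {Q X : Type*} [Order.Frame Q] [Order.Frame X] {Qf : InverseQuantalFrame Q}

/-- The support `ς_X(x) = ⟨x,x⟩ ∧ e` of a `Q`-sheaf. -/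
def sppX (H : QSheaf Qf X) (x : X) : Q := H.inner x x ⊓ Qf.e

/-- A local section: `ς_X(x)s = x` for all `x ≤ s`. -/
def IsLocalSection (H : QSheaf Qf X) (s : X) : Prop :=
  ∀ x ≤ s, H.act (H.sppX x) s = x

/-- A principal section: a local section with `⟨s,s⟩ ≤ e`. -/
def IsPrincipalSection (H : QSheaf Qf X) (s : X) : Prop :=
  H.IsLocalSection s ∧ H.inner s s ≤ Qf.e

/-- A right local section: `x = s ∧ 1_Q·x` for all `x ≤ s`. -/
def IsRightLocalSection (H : QSheaf Qf X) (s : X) : Prop :=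
  ∀ x ≤ s, x = s ⊓ H.act ⊤ x

/-- A local bisection: simultaneously a local section and a right local section. -/
def IsBisection (H : QSheaf Qf X) (s : X) : Prop :=
  H.IsLocalSection s ∧ H.IsRightLocalSection s

end QSheaf

theorem monotone_of_map_sSup {α β : Type*} [CompleteLattice α] [CompleteLattice β] {f : α → β}
    (hf : ∀ S : Set α, f (sSup S) = ⨆ a ∈ S, f a) : Monotone f :=
  OrderHomClass.mono (sSupHom.mk f fun S => by rw [hf, sSup_image])

namespace UQuantale

variable {Q : Type*} [CompleteLattice Q] (Qs : UQuantale Q)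

theorem mul_le_mul_right {a a' : Q} (h : a ≤ a') (b : Q) : Qs.mul a b ≤ Qs.mul a' b :=
  monotone_of_map_sSup (f := (Qs.mul · b)) (Qs.sSup_mul · b) h

theorem top_mul_top : Qs.mul ⊤ ⊤ = ⊤ :=
  top_unique <| calc
    (⊤ : Q) = Qs.mul Qs.e ⊤ := (Qs.e_mul ⊤).symm
    _ ≤ Qs.mul ⊤ ⊤ := Qs.mul_le_mul_right le_top ⊤

end UQuantale

namespace QuantaleModule

variable {Q X : Type*} [CompleteLattice Q] [CompleteLattice X] {Qs : UQuantale Q}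
  (M : QuantaleModule Qs X)

theorem act_mono_left {a a' : Q} (h : a ≤ a') (x : X) : M.act a x ≤ M.act a' x :=
  monotone_of_map_sSup (f := (M.act · x)) (M.sSup_act · x) h

theorem act_mono_right (a : Q) : Monotone (M.act a) :=
  monotone_of_map_sSup (M.act_sSup a)

theorem le_top_act (x : X) : x ≤ M.act ⊤ x :=
  calc x = M.act Qs.e x := (M.act_e x).symm
    _ ≤ M.act ⊤ x := M.act_mono_left le_top x

theorem top_act_top_act (x : X) : M.act ⊤ (M.act ⊤ x) = M.act ⊤ x := by
  rw [← M.act_mul, Qs.top_mul_top]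

/-- The invariant elements are exactly those of the form `1·x'`, and `1·(x ∧ y) ≤ 1·x ∧ y`
holds for every invariant `y` by monotonicity, so only the reverse inequality is at stake. -/
theorem top_act_inf_invariant_iff :
    (∀ x y : X, M.act ⊤ y = y → M.act ⊤ (x ⊓ y) = M.act ⊤ x ⊓ y) ↔
      ∀ x x' : X, M.act ⊤ x ⊓ M.act ⊤ x' ≤ M.act ⊤ (x ⊓ M.act ⊤ x') := by
  constructor
  · intro hequiv x x'
    rw [hequiv x _ (M.top_act_top_act x')]
  · intro hle x y hy
    have hle_xy := hle x y
    have hge_y : M.act ⊤ (x ⊓ y) ≤ M.act ⊤ y := M.act_mono_right ⊤ inf_le_right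
    rw [hy] at hle_xy hge_y
    exact le_antisymm (le_inf (M.act_mono_right ⊤ inf_le_left) hge_y) hle_xy

end QuantaleModule

/-- In a `Q`-locale, `ς'(x) := 1_Q·x` is invariant and contains
`x`, and `ς'` is `I(X)`-equivariant iff `1x ∧ 1x' ≤ 1(x ∧ 1x')` for all
`x, x'`. -/
theorem stmt5 {Q X : Type*} [Order.Frame Q] [Order.Frame X]
    (Qf : InverseQuantalFrame Q) (H : QLocale Qf X) :
    (∀ x : X, H.act ⊤ (H.act ⊤ x) = H.act ⊤ x) ∧
    (∀ x : X, x ⊓ H.act ⊤ x = x) ∧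
    ((∀ x y : X, H.act ⊤ y = y → H.act ⊤ (x ⊓ y) = H.act ⊤ x ⊓ y) ↔
      (∀ x x' : X, H.act ⊤ x ⊓ H.act ⊤ x' ≤ H.act ⊤ (x ⊓ H.act ⊤ x'))) :=
  ⟨H.top_act_top_act, fun x => inf_eq_left.mpr (H.le_top_act x), H.top_act_inf_invariant_iff⟩
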